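/- arXiv:2604.22186 — 6 statements merged into one kernel-verified Lean document; each statement's English description precedes it below -/
import Mathlib

section
/- Let C be an abelian category and suppose given a morphism of short exact sequences: rows 0 → X →f Y →g Z → 0 and 0 → X' →f' Y' →g' Z → 0, with vertical maps α : X → X', β : Y → Y', and the identity on Z, making both squares commute. Then the sequence 0 → X →[f;α] Y ⊕ X' →(β,−f') Y' → 0 is a short exact sequence, where the first map has components f and α, and the second map is β on the first summand and −f' on the second. -/
open CategoryTheory CategoryTheory.Limits

/-- Given a morphism of short exact sequences with identity on the third term,
the sequence `0 → X → Y ⊞ X' → Y' → 0` with maps `[f;α]` and `(β,−f')` is short exact. -/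
theorem stmt2 {C : Type*} [Category C] [Abelian C]
    {X Y Z X' Y' : C} (f : X ⟶ Y) (g : Y ⟶ Z) (f' : X' ⟶ Y') (g' : Y' ⟶ Z)
    (w1 : f ≫ g = 0) (h1 : (ShortComplex.mk f g w1).ShortExact)
    (w2 : f' ≫ g' = 0) (h2 : (ShortComplex.mk f' g' w2).ShortExact)
    (α : X ⟶ X') (β : Y ⟶ Y') (comm1 : f ≫ β = α ≫ f') (comm2 : β ≫ g' = g) :
    ∃ w : biprod.lift f α ≫ biprod.desc β (-f') = 0,
      (ShortComplex.mk (biprod.lift f α) (biprod.desc β (-f')) w).ShortExact := by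
  have hmf : Mono f := h1.mono_f
  have hmf' : Mono f' := h2.mono_f
  have heg : Epi g := h1.epi_g
  have w : biprod.lift f α ≫ biprod.desc β (-f') = 0 := by
    rw [biprod.lift_desc, Preadditive.comp_neg, comm1, add_neg_cancel]
  refine ⟨w, ?_⟩
  have key : ∀ {T : C} (a : T ⟶ Y), a ≫ g = 0 → {l : T ⟶ X // l ≫ f = a} := by
    intro T a ha
    exact ⟨(Fork.IsLimit.lift' h1.fIsKernel a (by rw [comp_zero]; exact ha)).1,
      by simpa using (Fork.IsLimit.lift' h1.fIsKernel a (by rw [comp_zero]; exact ha)).2⟩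
  have hfst0 : ∀ (s : PullbackCone β f'), s.fst ≫ g = 0 := by
    intro s
    rw [← comm2, ← Category.assoc, s.condition, Category.assoc, w2, comp_zero]
  -- the square is a pullback
  have hpb : IsPullback f α β f' := by
    refine IsPullback.of_isLimit (PullbackCone.IsLimit.mk comm1
      (fun s => (key s.fst (hfst0 s)).1) (fun s => (key s.fst (hfst0 s)).2)
      (fun s => ?_) (fun s m hm₁ hm₂ => ?_))
    · rw [← cancel_mono f', Category.assoc, ← comm1, ← Category.assoc,
        (key s.fst (hfst0 s)).2, s.condition]
    · rw [← cancel_mono f, hm₁, (key s.fst (hfst0 s)).2]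
  have hexact : (ShortComplex.mk (biprod.lift f α) (biprod.desc β (-f')) w).Exact := by
    apply ShortComplex.exact_of_f_is_kernel
    exact hpb.isLimitKernelFork
  have hmono : Mono (biprod.lift f α) :=
    mono_of_mono_fac (biprod.lift_fst f α)
  have hepi : Epi (biprod.desc β (-f')) := by
    apply CategoryTheory.Preadditive.epi_of_cancel_zero
    intro R t ht
    have hβ : β ≫ t = 0 := by
      have := biprod.inl ≫= ht
      simpa using this
    have hf' : f' ≫ t = 0 := by
      have := biprod.inr ≫= ht
      rw [← Category.assoc, biprod.inr_desc, Preadditive.neg_comp, comp_zero,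
        neg_eq_zero] at this
      exact this
    obtain ⟨s, hs⟩ := Cofork.IsColimit.desc' h2.gIsCokernel t
      (by rw [zero_comp]; exact hf')
    have hs' : g' ≫ s = t := by simpa using hs
    have hgs : g ≫ s = 0 := by
      rw [← comm2, Category.assoc, hs', hβ]
    have : s = 0 := by rwa [← cancel_epi g, comp_zero]
    rw [← hs', this, comp_zero]
  exact { exact := hexact, mono_f := hmono, epi_g := hepi }
end

section
/- Let C be an abelian category and suppose given a morphism of short exact sequences: rows 0 → X →f Y →g Z → 0 and 0 → X →f' Y' →g' Z' → 0, with the identity on X and vertical maps β : Y → Y', γ : Z → Z' making both squares commute. Then the sequence 0 → Y →[−g;β] Z ⊕ Y' →(γ,g') Z' → 0 is a short exact sequence. -/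
open CategoryTheory CategoryTheory.Limits

/-- Given a morphism of short exact sequences with identity on the first term,
the sequence `0 → Y → Z ⊞ Y' → Z' → 0` with maps `[−g;β]` and `(γ,g')` is short exact. -/
theorem stmt3 {C : Type*} [Category C] [Abelian C]
    {X Y Z Y' Z' : C} (f : X ⟶ Y) (g : Y ⟶ Z) (f' : X ⟶ Y') (g' : Y' ⟶ Z')
    (w1 : f ≫ g = 0) (h1 : (ShortComplex.mk f g w1).ShortExact)
    (w2 : f' ≫ g' = 0) (h2 : (ShortComplex.mk f' g' w2).ShortExact)
    (β : Y ⟶ Y') (γ : Z ⟶ Z') (comm1 : f ≫ β = f') (comm2 : β ≫ g' = g ≫ γ) :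
    ∃ w : biprod.lift (-g) β ≫ biprod.desc γ g' = 0,
      (ShortComplex.mk (biprod.lift (-g) β) (biprod.desc γ g') w).ShortExact := by
  have hw : biprod.lift (-g) β ≫ biprod.desc γ g' = 0 := by
    simp [comm2]
  refine ⟨hw, ?_⟩
  have hmono : Mono f' := h2.mono_f
  have hepi : Epi g := h1.epi_g
  have hepi' : Epi g' := h2.epi_g
  have hex1 := h1.exact
  have hex2 := h2.exact
  have mono1 : Mono (biprod.lift (-g) β) := by
    rw [Preadditive.mono_iff_cancel_zero]
    intro A u hu
    have hug : u ≫ g = 0 := by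
      have := hu =≫ biprod.fst
      simpa [neg_eq_zero] using this
    have hub : u ≫ β = 0 := by
      have := hu =≫ biprod.snd
      simpa using this
    obtain ⟨A', π, hπ, v, fac⟩ := hex1.exact_up_to_refinements u hug
    have : v ≫ f' = 0 := by
      rw [← comm1, ← Category.assoc, ← fac, Category.assoc, hub, comp_zero]
    have hv : v = 0 := by
      rwa [← cancel_mono f', zero_comp]
    rw [← cancel_epi π, comp_zero, fac, hv, zero_comp]
  have epi2 : Epi (biprod.desc γ g') := by
    have : biprod.inr ≫ biprod.desc γ g' = g' := by simp
    exact epi_of_epi_fac this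
  have hexact : (ShortComplex.mk (biprod.lift (-g) β) (biprod.desc γ g') hw).Exact := by
    rw [ShortComplex.exact_iff_exact_up_to_refinements]
    intro A x hx
    dsimp at x hx ⊢
    set a : A ⟶ Z := x ≫ biprod.fst with ha
    set b : A ⟶ Y' := x ≫ biprod.snd with hb
    have hdesc : biprod.fst ≫ γ + biprod.snd ≫ g' = biprod.desc γ g' := by
      ext <;> simp
    have hab : a ≫ γ + b ≫ g' = 0 := by
      rw [ha, hb, Category.assoc, Category.assoc, ← Preadditive.comp_add, hdesc, hx]
    obtain ⟨A', π, hπ, y, facy⟩ := surjective_up_to_refinements_of_epi g a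
    have key : (π ≫ b + y ≫ β) ≫ g' = 0 := by
      have h3 : (y ≫ β) ≫ g' = π ≫ (a ≫ γ) := by
        rw [Category.assoc, comm2, ← Category.assoc, ← facy, Category.assoc]
      rw [Preadditive.add_comp, h3, Category.assoc, ← Preadditive.comp_add,
        add_comm, hab, comp_zero]
    obtain ⟨A'', π', hπ', v, facv⟩ := hex2.exact_up_to_refinements (π ≫ b + y ≫ β) key
    dsimp at facv
    have facv' : π' ≫ π ≫ b + π' ≫ y ≫ β = v ≫ f' := by
      simp [← facv, Preadditive.comp_add]
    refine ⟨A'', π' ≫ π, epi_comp _ _, -(π' ≫ y) + v ≫ f, ?_⟩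
    apply biprod.hom_ext
    · simp only [Category.assoc, Preadditive.add_comp, Preadditive.neg_comp,
        biprod.lift_fst, Preadditive.comp_neg, neg_neg, ← ha]
      simp [w1]
      rw [← facy]
    · simp only [Category.assoc, Preadditive.add_comp, Preadditive.neg_comp,
        biprod.lift_snd, ← hb, ← comm1]
      rw [comm1, ← facv']
      abel
  exact { exact := hexact, mono_f := mono1, epi_g := epi2 }
end

section
/- Let C be an abelian category. Given short exact sequences 0 → A₁ →e₁ E →p₂ B₂ → 0, 0 → A₁ →f₁ B₁ →g₁ X → 0, and 0 → A₂ →e₂ E →p₁ B₁ → 0 such that f₁ = p₁ ∘ e₁, there exist morphisms f₂ : A₂ → B₂ and g₂ : B₂ → X such that 0 → A₂ →f₂ B₂ →g₂ X → 0 is a short exact sequence, f₂ = p₂ ∘ e₂, and g₂ ∘ p₂ = g₁ ∘ p₁. -/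
/-!
Since `e₁ ≫ p₁ ≫ g₁ = f₁ ≫ g₁ = 0`, the map `p₁ ≫ g₁` factors through the cokernel `p₂` of `e₁`,
giving `g₂`. The rest is a diagram chase in `E`: `A₂ = ker p₁` meets `A₁ = ker p₂` trivially
because `p₁` is injective on `A₁`, and `ker (p₁ ≫ g₁) = A₁ + A₂` because `p₁` maps `A₁` onto
`ker g₁`; pushing both facts along `p₂` gives exactness of `0 → A₂ → B₂ → X`.
-/

open CategoryTheory CategoryTheory.Limits

open scoped Pseudoelement

namespace CategoryTheory.Abelian

open _root_.CategoryTheory.Abelian.Pseudoelement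

variable {C : Type*} [Category C] [Abelian C] {A₁ A₂ E B₁ B₂ : C}
  {e₁ : A₁ ⟶ E} {p₂ : E ⟶ B₂} {e₂ : A₂ ⟶ E} {p₁ : E ⟶ B₁}

theorem mono_comp_of_exact_of_mono_comp {w₁ : e₁ ≫ p₂ = 0}
    (h₁ : (ShortComplex.mk e₁ p₂ w₁).Exact) [Mono e₂] [Mono (e₁ ≫ p₁)] (w : e₂ ≫ p₁ = 0) :
    Mono (e₂ ≫ p₂) := by
  refine mono_of_zero_of_map_zero _ fun a ha => ?_
  rw [Pseudoelement.comp_apply] at ha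
  obtain ⟨a₁, ha₁⟩ := pseudo_exact_of_exact h₁ _ ha
  have hfa₁ : (e₁ ≫ p₁) a₁ = 0 := by
    rw [Pseudoelement.comp_apply, ha₁, ← Pseudoelement.comp_apply, w, Pseudoelement.zero_apply]
  rw [zero_of_map_zero _ (pseudo_injective_of_mono _) _ hfa₁, apply_zero] at ha₁
  exact zero_of_map_zero _ (pseudo_injective_of_mono e₂) _ ha₁.symm

theorem exact_comp_of_exact_of_comp_eq {X : C} (w₁ : e₁ ≫ p₂ = 0) {g₁ : B₁ ⟶ X}
    {w₂ : (e₁ ≫ p₁) ≫ g₁ = 0} {w₃ : e₂ ≫ p₁ = 0} {g₂ : B₂ ⟶ X} (w : (e₂ ≫ p₂) ≫ g₂ = 0)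
    [Epi p₂] (h₂ : (ShortComplex.mk (e₁ ≫ p₁) g₁ w₂).Exact)
    (h₃ : (ShortComplex.mk e₂ p₁ w₃).Exact) (hg : p₂ ≫ g₂ = p₁ ≫ g₁) :
    (ShortComplex.mk (e₂ ≫ p₂) g₂ w).Exact := by
  refine exact_of_pseudo_exact _ fun b hb => ?_
  obtain ⟨x, rfl⟩ := pseudo_surjective_of_epi p₂ b
  have hgx : g₁ (p₁ x) = 0 := by
    rw [← Pseudoelement.comp_apply, ← hg, Pseudoelement.comp_apply, hb]
  obtain ⟨a₁, ha₁⟩ := pseudo_exact_of_exact h₂ _ hgx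
  rw [Pseudoelement.comp_apply] at ha₁
  obtain ⟨z, hz, hzx⟩ := sub_of_eq_image p₁ x (e₁ a₁) ha₁.symm
  obtain ⟨a₂, rfl⟩ := pseudo_exact_of_exact h₃ z hz
  have hpa₁ : p₂ (e₁ a₁) = 0 := by
    rw [← Pseudoelement.comp_apply, w₁, Pseudoelement.zero_apply]
  exact ⟨a₂, by rw [Pseudoelement.comp_apply]; exact hzx B₂ p₂ hpa₁⟩

end CategoryTheory.Abelian

/-- Given short exact sequences `0 → A₁ → E → B₂ → 0`, `0 → A₁ → B₁ → X → 0` and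
`0 → A₂ → E → B₁ → 0` with `f₁ = p₁ ∘ e₁`, there is a short exact sequence
`0 → A₂ → B₂ → X → 0` with `f₂ = p₂ ∘ e₂` and `g₂ ∘ p₂ = g₁ ∘ p₁`. -/
theorem stmt9 {C : Type*} [Category C] [Abelian C]
    {A₁ A₂ B₁ B₂ E X : C}
    (e₁ : A₁ ⟶ E) (p₂ : E ⟶ B₂) (f₁ : A₁ ⟶ B₁) (g₁ : B₁ ⟶ X)
    (e₂ : A₂ ⟶ E) (p₁ : E ⟶ B₁)
    (w1 : e₁ ≫ p₂ = 0) (h1 : (ShortComplex.mk e₁ p₂ w1).ShortExact)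
    (w2 : f₁ ≫ g₁ = 0) (h2 : (ShortComplex.mk f₁ g₁ w2).ShortExact)
    (w3 : e₂ ≫ p₁ = 0) (h3 : (ShortComplex.mk e₂ p₁ w3).ShortExact)
    (hf : f₁ = e₁ ≫ p₁) :
    ∃ (f₂ : A₂ ⟶ B₂) (g₂ : B₂ ⟶ X) (w : f₂ ≫ g₂ = 0),
      (ShortComplex.mk f₂ g₂ w).ShortExact ∧
      f₂ = e₂ ≫ p₂ ∧ p₂ ≫ g₂ = p₁ ≫ g₁ := by
  subst hf
  obtain ⟨g₂, hg₂⟩ := CokernelCofork.IsColimit.desc' h1.gIsCokernel (p₁ ≫ g₁)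
    (by rw [← Category.assoc, w2])
  dsimp at hg₂
  have w : (e₂ ≫ p₂) ≫ g₂ = 0 := by
    rw [Category.assoc, hg₂, ← Category.assoc, w3, zero_comp]
  have := h1.epi_g
  have := h2.mono_f
  have := h3.mono_f
  have := h2.epi_g
  have := h3.epi_g
  refine ⟨e₂ ≫ p₂, g₂, w, .mk' ?_ ?_ (epi_of_epi_fac hg₂), rfl, hg₂⟩
  · exact Abelian.exact_comp_of_exact_of_comp_eq w1 w h2.exact h3.exact hg₂
  · exact Abelian.mono_comp_of_exact_of_mono_comp h1.exact w3
end

section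
/- Let R be a commutative Artinian ring. Then for every r ∈ R there exists a ∈ R such that 1 + r + a·r² is a unit of R. -/
/-- Condition (C1) of Canonaco–Künzer holds in a commutative Artinian ring:
for every `r` there exists `a` with `1 + r + a * r ^ 2` a unit. -/
theorem stmt13 {R : Type*} [CommRing R] [IsArtinianRing R] (r : R) :
    ∃ a : R, IsUnit (1 + r + a * r ^ 2) := by
  -- the descending chain of ideals (r^n) stabilizes
  have hmono : ∀ m n : ℕ, m ≤ n →
      Ideal.span {r ^ n} ≤ Ideal.span {r ^ m} := by
    intro m n h
    rw [Ideal.span_singleton_le_span_singleton]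
    exact ⟨r ^ (n - m), by rw [← pow_add, Nat.add_sub_cancel' h]⟩
  obtain ⟨n, hn⟩ := IsArtinian.monotone_stabilizes
    (⟨fun n => OrderDual.toDual (Ideal.span {r ^ n}), fun m n h => hmono m n h⟩ :
      ℕ →o (Ideal R)ᵒᵈ)
  -- so r^(n+1) ∈ (r^(n+2)), giving r^(n+1) = r^(n+2) * s
  have h1 : r ^ (n + 1) ∈ Ideal.span {r ^ (n + 2)} := by
    have h2 : Ideal.span {r ^ n} = Ideal.span {r ^ (n + 2)} :=
      congrArg OrderDual.ofDual (hn (n + 2) (by omega))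
    exact h2 ▸ hmono n (n + 1) (by omega) (Ideal.mem_span_singleton_self _)
  rw [Ideal.mem_span_singleton] at h1
  obtain ⟨s, hs⟩ := h1
  -- then r * (1 - s * r) is nilpotent
  have hnil : IsNilpotent (r * (1 - s * r)) := by
    refine ⟨n + 1, ?_⟩
    have key : r ^ (n + 1) * (1 - s * r) = 0 := by
      have h2 : r ^ (n + 1) * (s * r) = r ^ (n + 2) * s := by rw [pow_succ]; ring
      rw [mul_sub, mul_one, h2, ← hs, sub_self]
    calc (r * (1 - s * r)) ^ (n + 1)
        = r ^ (n + 1) * (1 - s * r) * (1 - s * r) ^ n := by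
          rw [mul_pow, pow_succ]; ring
      _ = 0 := by rw [key, zero_mul]
  refine ⟨-s, ?_⟩
  have heq : (1 : R) + r + -s * r ^ 2 = 1 + r * (1 - s * r) := by ring
  rw [heq]
  exact hnil.isUnit_one_add
end

section
/- Let k be a field and R a finite-dimensional (not necessarily commutative) k-algebra. Then for every r ∈ R there exists a ∈ R such that 1 + r + a·r² is a unit of R. -/
open Polynomial

/-- Core commutative argument: if `x ^ n = x ^ (n+1) * b` in a commutative ring, then
some `1 + x + a * x ^ 2` is a unit. -/
lemma stmt14_aux {Q : Type*} [CommRing Q] (x b : Q) (n : ℕ)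
    (h : x ^ n = x ^ (n + 1) * b) :
    ∃ a : Q, IsUnit (1 + x + a * x ^ 2) := by
  have h1 : x ^ n = x ^ n * (x * b) := by
    conv_lhs => rw [h]
    ring
  have h2 : ∀ m, x ^ n = x ^ n * (x * b) ^ m := by
    intro m
    induction m with
    | zero => simp
    | succ m ih => rw [pow_succ, ← mul_assoc, ← ih]; exact h1
  have h4 : x ^ (n + 1) * (1 - (x * b) ^ (n + 2)) = 0 := by
    linear_combination x * (h2 (n + 2))
  have hnil : IsNilpotent (x * (1 - (x * b) ^ (n + 2))) := by
    refine ⟨n + 1, ?_⟩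
    calc (x * (1 - (x * b) ^ (n + 2))) ^ (n + 1)
        = (x ^ (n + 1) * (1 - (x * b) ^ (n + 2))) * (1 - (x * b) ^ (n + 2)) ^ n := by
          rw [mul_pow, pow_succ]; ring
      _ = 0 := by rw [h4, zero_mul]
  refine ⟨-(b ^ (n + 2) * x ^ (n + 1)), ?_⟩
  have heq : 1 + x + -(b ^ (n + 2) * x ^ (n + 1)) * x ^ 2
      = 1 + x * (1 - (x * b) ^ (n + 2)) := by
    rw [mul_pow]; ring
  rw [heq]
  exact hnil.isUnit_one_add

/-- Condition (C1) of Canonaco–Künzer holds in a finite-dimensional algebra over a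
field: for every `r` there exists `a` with `1 + r + a * r ^ 2` a unit. -/
theorem stmt14 {k R : Type*} [Field k] [Ring R] [Algebra k R]
    [FiniteDimensional k R] (r : R) :
    ∃ a : R, IsUnit (1 + r + a * r ^ 2) := by
  have hint : IsIntegral k r := IsIntegral.of_finite k r
  have hp0 : minpoly k r ≠ 0 := minpoly.ne_zero hint
  obtain ⟨q, hq, hqd⟩ :=
    (minpoly k r).exists_eq_pow_rootMultiplicity_mul_and_not_dvd hp0 0
  rw [map_zero, sub_zero] at hq hqd
  have hc0 : q.coeff 0 ≠ 0 := by rwa [X_dvd_iff] at hqd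
  set n := (minpoly k r).rootMultiplicity 0 with hn
  set I := Ideal.span {minpoly k r} with hI
  set mk : k[X] →+* (k[X] ⧸ I) := Ideal.Quotient.mk I with hmk
  -- the minimal polynomial vanishes in the quotient
  have hz : mk (X ^ n * q) = 0 := by
    rw [← hq]
    exact Ideal.Quotient.eq_zero_iff_mem.mpr (Ideal.mem_span_singleton_self _)
  have hq' : X * q.divX + C (q.coeff 0) = q := X_mul_divX_add q
  have hzz : (mk X) ^ n * mk q = 0 := by
    rw [← map_pow, ← map_mul]; exact hz
  have hqq : mk q = mk X * mk q.divX + mk (C (q.coeff 0)) := by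
    conv_lhs => rw [← hq']
    rw [map_add, map_mul]
  have h0 : (mk X) ^ n * (mk X * mk q.divX + mk (C (q.coeff 0))) = 0 := by
    rw [← hqq]; exact hzz
  have hcc : mk (C (q.coeff 0)⁻¹) * mk (C (q.coeff 0)) = 1 := by
    rw [← map_mul, ← C_mul, inv_mul_cancel₀ hc0, C_1, map_one]
  have key : (mk X) ^ n = (mk X) ^ (n + 1) * (-(mk (C (q.coeff 0)⁻¹) * mk q.divX)) := by
    linear_combination (mk (C (q.coeff 0)⁻¹)) * h0 - ((mk X) ^ n) * hcc
  obtain ⟨a, ha⟩ := stmt14_aux (mk X) (-(mk (C (q.coeff 0)⁻¹) * mk q.divX)) n key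
  obtain ⟨A, rfl⟩ := Ideal.Quotient.mk_surjective a
  -- evaluation map to R
  have hφ0 : ∀ p ∈ I, (aeval r).toRingHom p = 0 := by
    intro p hp
    rw [hI, Ideal.mem_span_singleton] at hp
    obtain ⟨g, rfl⟩ := hp
    simp [minpoly.aeval]
  set φ : (k[X] ⧸ I) →+* R := Ideal.Quotient.lift I (aeval r).toRingHom hφ0 with hφ
  refine ⟨aeval r A, ?_⟩
  have hu := ha.map φ
  have heval : φ (1 + mk X + mk A * (mk X) ^ 2) = 1 + r + aeval r A * r ^ 2 := by
    simp [hφ, hmk, map_add, map_mul, map_pow, map_one, Ideal.Quotient.lift_mk, aeval_X]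
  rwa [heval] at hu
end

section
/- Let C be an abelian category with short exact sequences 0 → X →f Y →g Z → 0 and 0 → X' →f' Y' →g' Z → 0 sharing the third object Z, and let α : X → X', β : Y → Y' be morphisms with β∘f = f'∘α and g'∘β = g. Then for every object T, the sequence Hom(Y',T) → Hom(Y⊕X',T) → Hom(X,T), induced by precomposition with (β,−f') and with [f;α] respectively, is exact at Hom(Y⊕X',T). -/
open CategoryTheory CategoryTheory.Limits

/-- Exactness of `Hom(Y',T) → Hom(Y ⊞ X',T) → Hom(X,T)` at the middle term, for a
morphism of short exact sequences with identity on the third object. -/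
theorem stmt16 {C : Type*} [Category C] [Abelian C]
    {X Y Z X' Y' : C} (f : X ⟶ Y) (g : Y ⟶ Z) (f' : X' ⟶ Y') (g' : Y' ⟶ Z)
    (w1 : f ≫ g = 0) (h1 : (ShortComplex.mk f g w1).ShortExact)
    (w2 : f' ≫ g' = 0) (h2 : (ShortComplex.mk f' g' w2).ShortExact)
    (α : X ⟶ X') (β : Y ⟶ Y') (comm1 : f ≫ β = α ≫ f') (comm2 : β ≫ g' = g) :
    ∀ (T : C) (a : Y ⟶ T) (b : X' ⟶ T),
      (f ≫ a + α ≫ b = 0) ↔ ∃ s : Y' ⟶ T, β ≫ s = a ∧ -(f' ≫ s) = b := by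
  haveI hfm : Mono f := h1.mono_f
  haveI hf'm : Mono f' := h2.mono_f
  haveI hge : Epi g := h1.epi_g
  haveI : Mono (ShortComplex.mk f g w1).f := h1.mono_f
  haveI : Epi (ShortComplex.mk f' g' w2).g := h2.epi_g
  -- the short complex X ⟶ Y ⊞ X' ⟶ Y'
  have hw : biprod.lift f (-α) ≫ biprod.desc β f' = 0 := by
    simp [comm1]
  set S : ShortComplex C := ShortComplex.mk (biprod.lift f (-α)) (biprod.desc β f') hw with hS
  -- epi
  have hepi : Epi S.g := by
    rw [Preadditive.epi_iff_cancel_zero]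
    intro T u hu
    have hβu : β ≫ u = 0 := by
      have := biprod.inl ≫= hu; simpa [S] using this
    have hf'u : f' ≫ u = 0 := by
      have := biprod.inr ≫= hu; simpa [S] using this
    -- g' is a cokernel of f'
    have hcoker := h2.exact.gIsCokernel
    obtain ⟨v, hv⟩ := CokernelCofork.IsColimit.desc' hcoker u hf'u
    simp only [Cofork.π_ofπ] at hv
    have hgv : g ≫ v = 0 := by
      rw [← comm2, Category.assoc]
      change β ≫ (ShortComplex.mk f' g' w2).g ≫ v = 0
      rw [hv, hβu]
    have hv0 : v = 0 := (cancel_epi g).mp (by rw [hgv, comp_zero])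
    rw [← hv, hv0, comp_zero]
  -- exactness
  have hex : S.Exact := by
    rw [S.exact_iff_exact_up_to_refinements]
    intro A x₂ hx₂
    refine ⟨A, 𝟙 A, inferInstance, ?_⟩
    set y := x₂ ≫ biprod.fst with hy
    set x := x₂ ≫ biprod.snd with hxd
    have hyx : y ≫ β + x ≫ f' = 0 := by
      have : x₂ ≫ S.g = 0 := hx₂
      rw [show S.g = biprod.fst ≫ β + biprod.snd ≫ f' from by apply biprod.hom_ext' <;> simp [S]]
        at this
      simpa [hy, hxd, Preadditive.comp_add] using this
    have hyg : y ≫ g = 0 := by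
      have h' : (y ≫ β + x ≫ f') ≫ g' = 0 := by rw [hyx, zero_comp]
      simpa [Preadditive.add_comp, Category.assoc, comm2, w2] using h'
    obtain ⟨l, hl⟩ := KernelFork.IsLimit.lift' h1.exact.fIsKernel y hyg
    simp only [Fork.ι_ofι] at hl
    change l ≫ f = y at hl
    have h0 : (l ≫ α + x) ≫ f' = 0 ≫ f' := by
      rw [zero_comp, Preadditive.add_comp, Category.assoc, ← comm1, ← Category.assoc, hl, hyx]
    have h0' : l ≫ α + x = 0 := (cancel_mono f').mp h0
    have hx : x = -(l ≫ α) := by rw [eq_neg_iff_add_eq_zero, add_comm]; exact h0'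
    refine ⟨l, ?_⟩
    apply biprod.hom_ext
    · simpa [S, hy] using hl.symm
    · simp [S, hx, ← hxd]
  -- the cokernel universal property
  have hcoker : IsColimit (CokernelCofork.ofπ S.g S.zero) := hex.gIsCokernel
  intro T a b
  constructor
  · intro hab
    have hφ : S.f ≫ biprod.desc a (-b) = 0 := by
      simpa [S] using hab
    obtain ⟨s, hs⟩ := CokernelCofork.IsColimit.desc' hcoker (biprod.desc a (-b)) hφ
    simp only [Cofork.π_ofπ] at hs
    refine ⟨s, ?_, ?_⟩
    · have := biprod.inl ≫= hs; simpa [S] using this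
    · have := biprod.inr ≫= hs; simp [S] at this
      rw [this]; simp
  · rintro ⟨s, hs1, hs2⟩
    rw [← hs1, ← hs2]
    simp [← Category.assoc, comm1]
end
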